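/- arXiv:2110.14864 — 5 statements merged into one kernel-verified Lean document; each statement's English description precedes it below -/
import Mathlib

section
/- Let f : R^d → R be a concave function maximized at x* over a convex set C. Suppose f is G-strongly concave (with respect to the ℓ₂ norm) on S ∩ C, where S = {x : ‖x − x*‖₂ ≤ A} for some A > 0. If x ∈ C satisfies f(x*) − f(x) ≤ AG/2, then ‖x − x*‖₂ ≤ A. -/
/-!
If `‖x - x*‖ > A`, the point `y` of the segment `[x*, x]` at distance `A` from `x*` lies in
`C ∩ S`, so `f(x*) - f(y) ≥ AG/2`. Concavity along the segment gives
`f(x*) - f(y) ≤ (A / ‖x - x*‖) (f(x*) - f(x)) < AG/2`, a contradiction.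
-/

open AffineMap

section

variable {E : Type*} {C : Set E} {f : E → ℝ} {x₀ x : E}

theorem ConcaveOn.sub_lineMap_le [AddCommGroup E] [Module ℝ E] (hf : ConcaveOn ℝ C f)
    (hx₀ : x₀ ∈ C) (hx : x ∈ C) {t : ℝ} (ht : t ∈ Set.Icc (0 : ℝ) 1) :
    f x₀ - f (lineMap x₀ x t) ≤ t * (f x₀ - f x) := by
  have hconc := hf.2 hx₀ hx (sub_nonneg.2 ht.2) ht.1 (sub_add_cancel 1 t)
  rw [lineMap_apply_module]
  simp only [smul_eq_mul] at hconc
  linarith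

theorem ConcaveOn.norm_sub_mul_le_of_forall_norm_eq [NormedAddCommGroup E] [NormedSpace ℝ E]
    (hf : ConcaveOn ℝ C f) (hC : Convex ℝ C) (hx₀ : x₀ ∈ C) {A m : ℝ} (hA : 0 < A)
    (hsphere : ∀ y ∈ C, ‖y - x₀‖ = A → m ≤ f x₀ - f y) (hx : x ∈ C) (hAx : A ≤ ‖x - x₀‖) :
    ‖x - x₀‖ * m ≤ A * (f x₀ - f x) := by
  set r := ‖x - x₀‖
  have hr : 0 < r := hA.trans_le hAx
  have ht : A / r ∈ Set.Icc (0 : ℝ) 1 := ⟨by positivity, (div_le_one hr).2 hAx⟩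
  set y := lineMap x₀ x (A / r)
  have hyC : y ∈ C := hC.lineMap_mem hx₀ hx ht
  have hy : ‖y - x₀‖ = A := by
    rw [← vsub_eq_sub, lineMap_vsub_left, norm_smul, vsub_eq_sub, Real.norm_of_nonneg ht.1,
      div_mul_cancel₀ _ hr.ne']
  have hgap : m ≤ A / r * (f x₀ - f x) := (hsphere y hyC hy).trans (hf.sub_lineMap_le hx₀ hx ht)
  calc r * m ≤ r * (A / r * (f x₀ - f x)) := mul_le_mul_of_nonneg_left hgap hr.le
    _ = A * (f x₀ - f x) := by field_simp

end

theorem mem_ball_of_value_close_general {d : ℕ} (f : EuclideanSpace ℝ (Fin d) → ℝ)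
    (C : Set (EuclideanSpace ℝ (Fin d))) (hC : Convex ℝ C)
    (hconc : ConcaveOn ℝ C f) (xstar : EuclideanSpace ℝ (Fin d)) (hxstar : xstar ∈ C)
    (A G : ℝ) (hA : 0 < A) (hG : 0 < G)
    (hSC : ∀ x ∈ {x | ‖x - xstar‖ ≤ A} ∩ C, G / 2 * ‖x - xstar‖ ≤ f xstar - f x)
    (x : EuclideanSpace ℝ (Fin d)) (hx : x ∈ C)
    (hclose : f xstar - f x ≤ A * G / 2) :
    ‖x - xstar‖ ≤ A := by
  by_contra! hfar
  have hgrowth : ‖x - xstar‖ * (G / 2 * A) ≤ A * (f xstar - f x) :=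
    hconc.norm_sub_mul_le_of_forall_norm_eq hC hxstar hA
      (fun y hy hyA => hyA ▸ hSC y ⟨hyA.le, hy⟩) hx hfar.le
  nlinarith [mul_pos hA hG]

/-- If `f` is concave on a convex set `C` with maximizer `x*`, and `f` is `G`-strongly
concave on the ball `S = {x : ‖x − x*‖ ≤ A}` intersected with `C` (in the sense that
`f(x*) − f(x) ≥ (G/2)‖x − x*‖` there), then any `x ∈ C` with `f(x*) − f(x) ≤ AG/2`
satisfies `‖x − x*‖ ≤ A`. -/
theorem mem_ball_of_value_close {d : ℕ} (f : EuclideanSpace ℝ (Fin d) → ℝ)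
    (C : Set (EuclideanSpace ℝ (Fin d))) (hC : Convex ℝ C)
    (hconc : ConcaveOn ℝ C f) (xstar : EuclideanSpace ℝ (Fin d)) (hxstar : xstar ∈ C)
    (hmax : ∀ x ∈ C, f x ≤ f xstar) (A G : ℝ) (hA : 0 < A) (hG : 0 < G)
    (hSC : ∀ x ∈ {x | ‖x - xstar‖ ≤ A} ∩ C, G / 2 * ‖x - xstar‖ ≤ f xstar - f x)
    (x : EuclideanSpace ℝ (Fin d)) (hx : x ∈ C)
    (hclose : f xstar - f x ≤ A * G / 2) :
    ‖x - xstar‖ ≤ A :=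
  mem_ball_of_value_close_general f C hC hconc xstar hxstar A G hA hG hSC x hx hclose
end

section
/- Let Σ_P be symmetric positive definite and Σ̂_P symmetric with (1−γ)Σ_P ⪯ Σ̂_P ⪯ (1+γ)Σ_P for γ ∈ [0, 1/2]. Then for every v ∈ R^d, vᵀ (I − Σ_P^{1/2} Σ̂_P⁻¹ Σ_P^{1/2})² v ≤ 10γ ‖v‖₂². -/
/-!
Conjugating the sandwich by `Σ_P^{-1/2}` places `N = Σ_P^{-1/2} Σ̂_P Σ_P^{-1/2}` between
`(1 - γ) • 1` and `(1 + γ) • 1`, so its spectrum lies in `[1 - γ, 1 + γ]`; and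
`Σ_P^{1/2} Σ̂_P⁻¹ Σ_P^{1/2} = N⁻¹`. By the continuous functional calculus, `(1 - N⁻¹)²` is then
bounded by the maximum of `(1 - x⁻¹)²` on that interval, which is at most
`(γ / (1 - γ))² ≤ 4γ² ≤ 10γ`.
-/

open Matrix

/-- The square root of a positive semidefinite matrix, as `Matrix.PosSemidef.sqrt` was defined
in the older Mathlib (removed since). -/
noncomputable def Matrix.PosSemidef.sqrt {n : Type*} [Fintype n] [DecidableEq n]
    {A : Matrix n n ℝ} (hA : A.PosSemidef) : Matrix n n ℝ :=
  (hA.1.eigenvectorUnitary : Matrix n n ℝ) * diagonal ((↑) ∘ (√·) ∘ hA.1.eigenvalues) *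
    (star hA.1.eigenvectorUnitary : Matrix n n ℝ)

open scoped Ring MatrixOrder

section StarOrderedAlgebra

variable {A : Type*} [Ring A] [StarRing A] [PartialOrder A] [StarOrderedRing A] [Algebra ℝ A]

theorem Units.conj_inv_mem_Icc_algebraMap {u : Aˣ} (hu : IsSelfAdjoint (u : A)) {b : A}
    {r₁ r₂ : ℝ} (hb : b ∈ Set.Icc (r₁ • (u * u : A)) (r₂ • (u * u : A))) :
    (↑u⁻¹ * b * ↑u⁻¹ : A) ∈ Set.Icc (algebraMap ℝ A r₁) (algebraMap ℝ A r₂) := by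
  have hinv : IsSelfAdjoint (↑u⁻¹ : A) :=
    congrArg Units.val (show IsSelfAdjoint u from Units.ext hu.star_eq).inv
  have hconj (r : ℝ) : (↑u⁻¹ * (r • (u * u : A)) * ↑u⁻¹ : A) = algebraMap ℝ A r := by
    rw [Algebra.algebraMap_eq_smul_one, mul_smul_comm, smul_mul_assoc]
    simp
  exact ⟨hconj r₁ ▸ hinv.conjugate_le_conjugate hb.1, hconj r₂ ▸ hinv.conjugate_le_conjugate hb.2⟩

variable [StarModule ℝ A]

theorem IsSelfAdjoint.of_mem_Icc_algebraMap {a : A} {r₁ r₂ : ℝ}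
    (ha : a ∈ Set.Icc (algebraMap ℝ A r₁) (algebraMap ℝ A r₂)) : IsSelfAdjoint a :=
  .of_le ha.2 (.algebraMap A (.all r₂))

variable [TopologicalSpace A] [ContinuousFunctionalCalculus ℝ A IsSelfAdjoint]
  [NonnegSpectrumClass ℝ A]

theorem spectrum_subset_Icc_of_mem_Icc_algebraMap {a : A} {r₁ r₂ : ℝ}
    (ha : a ∈ Set.Icc (algebraMap ℝ A r₁) (algebraMap ℝ A r₂)) :
    spectrum ℝ a ⊆ Set.Icc r₁ r₂ := by
  have hsa := IsSelfAdjoint.of_mem_Icc_algebraMap ha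
  intro x hx
  exact ⟨(algebraMap_le_iff_le_spectrum hsa).1 ha.1 x hx,
    (le_algebraMap_iff_spectrum_le hsa).1 ha.2 x hx⟩

theorem isUnit_of_mem_Icc_algebraMap {a : A} {r₁ r₂ : ℝ} (hr₁ : 0 < r₁)
    (ha : a ∈ Set.Icc (algebraMap ℝ A r₁) (algebraMap ℝ A r₂)) : IsUnit a :=
  spectrum.zero_notMem_iff ℝ |>.1 fun h0 ↦
    hr₁.not_ge (spectrum_subset_Icc_of_mem_Icc_algebraMap ha h0).1

theorem sq_one_sub_ringInverse_le_algebraMap {a : A} {r₁ r₂ c : ℝ} (hr₁ : 0 < r₁)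
    (ha : a ∈ Set.Icc (algebraMap ℝ A r₁) (algebraMap ℝ A r₂))
    (hc : ∀ x ∈ Set.Icc r₁ r₂, (1 - x⁻¹) ^ 2 ≤ c) :
    (1 - a⁻¹ʳ) ^ 2 ≤ algebraMap ℝ A c := by
  have hsa := IsSelfAdjoint.of_mem_Icc_algebraMap ha
  have hspec := spectrum_subset_Icc_of_mem_Icc_algebraMap ha
  have hcont : ContinuousOn (fun x : ℝ ↦ x⁻¹) (spectrum ℝ a) :=
    continuousOn_inv₀.mono fun x hx ↦ (hr₁.trans_le (hspec hx).1).ne'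
  rw [← cfc_ringInverse_id (R := ℝ) a (isUnit_of_mem_Icc_algebraMap hr₁ ha), ← cfc_one ℝ a,
    ← cfc_sub .., ← cfc_pow ..]
  exact cfc_le_algebraMap _ c a fun x hx ↦ hc x (hspec hx)

theorem sq_one_sub_inv_le_of_mem_Icc {γ x : ℝ} (hγ : γ ∈ Set.Ico 0 1)
    (hx : x ∈ Set.Icc (1 - γ) (1 + γ)) : (1 - x⁻¹) ^ 2 ≤ (γ / (1 - γ)) ^ 2 := by
  have h1γ : 0 < 1 - γ := by linarith [hγ.2]
  have hx0 : 0 < x := h1γ.trans_le hx.1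
  have habs : |1 - x⁻¹| ≤ γ / (1 - γ) :=
    calc |1 - x⁻¹| = |x - 1| / x := by
          rw [show 1 - x⁻¹ = (x - 1) / x by field_simp, abs_div, abs_of_pos hx0]
      _ ≤ γ / (1 - γ) :=
          div_le_div₀ hγ.1 (abs_sub_le_iff.2 ⟨by linarith [hx.2], by linarith [hx.1]⟩) h1γ hx.1
  simpa only [sq_abs] using pow_le_pow_left₀ (abs_nonneg _) habs 2

theorem sq_one_sub_conj_ringInverse_le_algebraMap {s b : A} (hs : IsSelfAdjoint s)
    (hsu : IsUnit s) {γ : ℝ} (hγ : γ ∈ Set.Ico 0 1)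
    (hb : b ∈ Set.Icc ((1 - γ) • (s * s)) ((1 + γ) • (s * s))) :
    (1 - s * b⁻¹ʳ * s) ^ 2 ≤ algebraMap ℝ A ((γ / (1 - γ)) ^ 2) := by
  lift s to Aˣ using hsu
  have hN := s.conj_inv_mem_Icc_algebraMap hs hb
  obtain ⟨n, hn⟩ := isUnit_of_mem_Icc_algebraMap (by linarith [hγ.2]) hN
  have hb' : b = ↑(s * n * s) := by simp [hn, mul_assoc]
  have hsn : s * (s * n * s)⁻¹ * s = n⁻¹ := by group
  rw [hb', Ring.inverse_unit, ← Units.val_mul, ← Units.val_mul, hsn, ← Ring.inverse_unit]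
  exact sq_one_sub_ringInverse_le_algebraMap (by linarith [hγ.2]) (hn ▸ hN)
    fun x hx ↦ sq_one_sub_inv_le_of_mem_Icc hγ hx

end StarOrderedAlgebra

theorem Matrix.PosSemidef.sqrt_eq_cfcSqrt {n : Type*} [Fintype n] [DecidableEq n]
    {A : Matrix n n ℝ} (hA : A.PosSemidef) : hA.sqrt = CFC.sqrt A := by
  rw [CFC.sqrt_eq_cfc, cfc_nnreal_eq_real _ A, hA.1.cfc_eq]
  simp only [IsHermitian.cfc, Matrix.PosSemidef.sqrt]
  congr
  ext x
  -- `Real.sqrt x` is by definition `NNReal.sqrt x.toNNReal`, the form `CFC.sqrt` produces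
  rw [Real.sqrt]

theorem Matrix.dotProduct_mulVec_le_of_le_algebraMap {n : Type*} [Fintype n] [DecidableEq n]
    {X : Matrix n n ℝ} {c : ℝ} (h : X ≤ algebraMap ℝ _ c) (v : n → ℝ) :
    v ⬝ᵥ X *ᵥ v ≤ c * (v ⬝ᵥ v) := by
  have h' := (le_iff.1 h).dotProduct_mulVec_nonneg v
  rwa [Algebra.algebraMap_eq_smul_one, sub_mulVec, smul_mulVec, one_mulVec, star_trivial,
    dotProduct_sub, dotProduct_smul, smul_eq_mul, sub_nonneg] at h'

theorem sq_div_one_sub_le_ten_mul {γ : ℝ} (hγ : γ ∈ Set.Icc (0 : ℝ) (1 / 2)) :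
    (γ / (1 - γ)) ^ 2 ≤ 10 * γ := by
  have h1γ : 0 < 1 - γ := by linarith [hγ.2]
  have h : γ / (1 - γ) ≤ 2 * γ := by
    rw [div_le_iff₀ h1γ]; nlinarith [hγ.1, hγ.2]
  nlinarith [pow_le_pow_left₀ (div_nonneg hγ.1 h1γ.le) h 2, hγ.1, hγ.2]

theorem sandwiched_identity_deviation_bound_general {d : ℕ}
    (SigP SigHat : Matrix (Fin d) (Fin d) ℝ) (hSig : SigP.PosDef)
    (γ : ℝ) (hγ : γ ∈ Set.Icc (0:ℝ) (1/2))
    (hlow : (SigHat - (1 - γ) • SigP).PosSemidef)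
    (hupp : ((1 + γ) • SigP - SigHat).PosSemidef)
    (v : Fin d → ℝ) :
    v ⬝ᵥ (((1 : Matrix (Fin d) (Fin d) ℝ)
        - hSig.posSemidef.sqrt * SigHat⁻¹ * hSig.posSemidef.sqrt) ^ 2 *ᵥ v)
      ≤ 10 * γ * (v ⬝ᵥ v) := by
  have hS : CFC.sqrt SigP * CFC.sqrt SigP = SigP := CFC.sqrt_mul_sqrt_self SigP
  rw [← hS] at hlow hupp
  rw [hSig.posSemidef.sqrt_eq_cfcSqrt, nonsing_inv_eq_ringInverse]
  have hM := sq_one_sub_conj_ringInverse_le_algebraMap (CFC.sqrt_nonneg SigP).isSelfAdjoint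
    ((CFC.isUnit_sqrt_iff SigP).2 hSig.isUnit) ⟨hγ.1, by linarith [hγ.2]⟩ ⟨hlow, hupp⟩
  calc _ ≤ (γ / (1 - γ)) ^ 2 * (v ⬝ᵥ v) := dotProduct_mulVec_le_of_le_algebraMap hM v
    _ ≤ 10 * γ * (v ⬝ᵥ v) :=
      mul_le_mul_of_nonneg_right (sq_div_one_sub_le_ten_mul hγ) (dotProduct_self_star_nonneg v)

/-- If `(1−γ)Σ_P ⪯ Σ̂_P ⪯ (1+γ)Σ_P` with `Σ_P ≻ 0` and `γ ∈ [0, 1/2]`, then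
`vᵀ (I − Σ_P^{1/2} Σ̂_P⁻¹ Σ_P^{1/2})² v ≤ 10γ‖v‖₂²` for every `v`. -/
theorem sandwiched_identity_deviation_bound {d : ℕ}
    (SigP SigHat : Matrix (Fin d) (Fin d) ℝ) (hSig : SigP.PosDef)
    (hSigHat : SigHat.IsSymm)
    (γ : ℝ) (hγ : γ ∈ Set.Icc (0:ℝ) (1/2))
    (hlow : (SigHat - (1 - γ) • SigP).PosSemidef)
    (hupp : ((1 + γ) • SigP - SigHat).PosSemidef)
    (v : Fin d → ℝ) :
    v ⬝ᵥ (((1 : Matrix (Fin d) (Fin d) ℝ)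
        - hSig.posSemidef.sqrt * SigHat⁻¹ * hSig.posSemidef.sqrt) ^ 2 *ᵥ v)
      ≤ 10 * γ * (v ⬝ᵥ v) :=
  sandwiched_identity_deviation_bound_general SigP SigHat hSig γ hγ hlow hupp v
end

section
/- For μ ∈ (0,1), the value P = 1/2 + μ − √(1+4μ²)/2 satisfies P − μ(log(1−P) + log P) ≤ 2√μ. -/
/-! `P` is the critical point of the barrier `p ↦ p - μ (log (1 - p) + log p)`: it solves
`p² - (1 + 2μ) p + μ = 0`, so `(1 - P) P = μ / (s + 2μ)` with `s = √(1 + 4μ²)`. The left-hand side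
therefore equals `P - μ log μ + μ log (s + 2μ)`. Writing `μ = t²`, `t log t ≥ t - 1` gives
`-μ log μ ≤ 2√μ - 2μ`, and the tangent line `log x ≤ x / 4 + log 4 - 1` turns `P + μ log (s + 2μ) ≤ 2μ`
into a polynomial inequality in `μ` and `s`. -/

open Real

namespace Real

theorem two_mul_sub_sqrt_le_mul_log {x : ℝ} (hx : 0 < x) : 2 * (x - √x) ≤ x * log x := by
  have ht : 0 < √x := sqrt_pos.2 hx
  have h := mul_le_mul_of_nonneg_left (one_sub_inv_le_log_of_pos ht) ht.le
  rw [mul_sub, mul_one, mul_inv_cancel₀ ht.ne'] at h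
  calc 2 * (x - √x) = 2 * √x * (√x - 1) := by linear_combination -2 * mul_self_sqrt hx.le
    _ ≤ 2 * √x * (√x * log √x) := by gcongr
    _ = x * log x := by rw [log_sqrt hx.le]; linear_combination log x * mul_self_sqrt hx.le

theorem log_le_div_add_log_sub_one {x c : ℝ} (hx : 0 < x) (hc : 0 < c) :
    log x ≤ x / c + log c - 1 := by
  have h := log_le_sub_one_of_pos (div_pos hx hc)
  rw [log_div hx.ne' hc.ne'] at h
  linarith

theorem log_four_lt : log 4 < 7 / 5 := by
  rw [show (4 : ℝ) = 2 ^ 2 by norm_num, log_pow]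
  push_cast
  linarith [log_two_lt_d9]

end Real

noncomputable def barrierPoint (μ : ℝ) : ℝ := 1 / 2 + μ - √(1 + 4 * μ ^ 2) / 2

lemma sq_sqrt_one_add_four_mul_sq (μ : ℝ) : √(1 + 4 * μ ^ 2) ^ 2 = 1 + 4 * μ ^ 2 :=
  sq_sqrt (by positivity)

lemma abs_two_mul_lt_sqrt_one_add_four_mul_sq (μ : ℝ) : |2 * μ| < √(1 + 4 * μ ^ 2) :=
  abs_lt_of_sq_lt_sq (by rw [sq_sqrt_one_add_four_mul_sq]; nlinarith) (sqrt_nonneg _)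

lemma sqrt_one_add_four_mul_sq_add_two_mul_pos (μ : ℝ) : 0 < √(1 + 4 * μ ^ 2) + 2 * μ := by
  linarith [(abs_lt.1 (abs_two_mul_lt_sqrt_one_add_four_mul_sq μ)).1]

lemma barrierPoint_pos {μ : ℝ} (hμ : 0 < μ) : 0 < barrierPoint μ := by
  have : √(1 + 4 * μ ^ 2) < 1 + 2 * μ := by
    nlinarith [sq_sqrt_one_add_four_mul_sq μ, sqrt_nonneg (1 + 4 * μ ^ 2)]
  unfold barrierPoint
  linarith

lemma barrierPoint_lt_one (μ : ℝ) : barrierPoint μ < 1 := by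
  have := (abs_lt.1 (abs_two_mul_lt_sqrt_one_add_four_mul_sq μ)).2
  unfold barrierPoint
  linarith

lemma one_sub_barrierPoint_mul_self (μ : ℝ) :
    (1 - barrierPoint μ) * barrierPoint μ = μ / (√(1 + 4 * μ ^ 2) + 2 * μ) := by
  rw [eq_div_iff (sqrt_one_add_four_mul_sq_add_two_mul_pos μ).ne', barrierPoint]
  linear_combination (μ / 2 - √(1 + 4 * μ ^ 2) / 4) * sq_sqrt_one_add_four_mul_sq μ

lemma log_one_sub_barrierPoint_add_log {μ : ℝ} (hμ : 0 < μ) :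
    log (1 - barrierPoint μ) + log (barrierPoint μ) = log μ - log (√(1 + 4 * μ ^ 2) + 2 * μ) := by
  rw [← log_mul (sub_pos.2 (barrierPoint_lt_one μ)).ne' (barrierPoint_pos hμ).ne',
    one_sub_barrierPoint_mul_self, log_div hμ.ne' (sqrt_one_add_four_mul_sq_add_two_mul_pos μ).ne']

lemma barrierPoint_add_mul_log_le {μ : ℝ} (hμ : μ ∈ Set.Ioo (0 : ℝ) 1) :
    barrierPoint μ + μ * log (√(1 + 4 * μ ^ 2) + 2 * μ) ≤ 2 * μ := by
  obtain ⟨hμ0, hμ1⟩ := hμ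
  set s := √(1 + 4 * μ ^ 2)
  have hlog : log (s + 2 * μ) ≤ (s + 2 * μ) / 4 + 2 / 5 := by
    linarith [log_le_div_add_log_sub_one (x := s + 2 * μ) (by positivity) four_pos, log_four_lt]
  calc barrierPoint μ + μ * log (s + 2 * μ) ≤ barrierPoint μ + μ * ((s + 2 * μ) / 4 + 2 / 5) := by
        gcongr
    _ ≤ 2 * μ := by
        unfold barrierPoint
        nlinarith [sq_sqrt_one_add_four_mul_sq μ, sqrt_nonneg (1 + 4 * μ ^ 2),
          mul_pos hμ0 (sub_pos.2 hμ1), mul_pos (mul_pos hμ0 hμ0) (sub_pos.2 hμ1)]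

/-- For `μ ∈ (0,1)` and `P = 1/2 + μ − √(1+4μ²)/2`,
`P − μ(log(1−P) + log P) ≤ 2√μ`. -/
theorem barrier_value_bound (μ : ℝ) (hμ : μ ∈ Set.Ioo (0:ℝ) 1) :
    let P : ℝ := 1/2 + μ - Real.sqrt (1 + 4*μ^2) / 2
    P - μ * (Real.log (1 - P) + Real.log P) ≤ 2 * Real.sqrt μ := by
  show barrierPoint μ - μ * (log (1 - barrierPoint μ) + log (barrierPoint μ)) ≤ 2 * √μ
  rw [log_one_sub_barrierPoint_add_log hμ.1]
  linarith [two_mul_sub_sqrt_le_mul_log hμ.1, barrierPoint_add_mul_log_le hμ]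
end

section
/- For μ ∈ (0,1) and q ≠ 0, the derivative of P(q) = 1/2 − μ/q + √(q² + 4μ²)/(2q) with respect to q equals (μ√(q²+4μ²) − 2μ²)/(q²√(q²+4μ²)), and this derivative lies in [0, 1/(8μ)] for all q ≠ 0. -/
/-- For `μ ∈ (0,1)` and `q ≠ 0`, the function
`P(q) = 1/2 − μ/q + √(q² + 4μ²)/(2q)` has derivative
`(μ√(q²+4μ²) − 2μ²)/(q²√(q²+4μ²))` at `q`, and this derivative lies in `[0, 1/(8μ)]`. -/
theorem P_deriv (μ q : ℝ) (hμ : μ ∈ Set.Ioo (0:ℝ) 1) (hq : q ≠ 0) :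
    HasDerivAt (fun q : ℝ => 1/2 - μ/q + Real.sqrt (q^2 + 4*μ^2) / (2*q))
      ((μ * Real.sqrt (q^2 + 4*μ^2) - 2*μ^2) / (q^2 * Real.sqrt (q^2 + 4*μ^2))) q
    ∧ (μ * Real.sqrt (q^2 + 4*μ^2) - 2*μ^2) / (q^2 * Real.sqrt (q^2 + 4*μ^2))
        ∈ Set.Icc (0:ℝ) (1 / (8*μ)) := by
  obtain ⟨hμ0, hμ1⟩ := hμ
  have hpos : (0:ℝ) < q^2 + 4*μ^2 := by positivity
  set s := Real.sqrt (q^2 + 4*μ^2) with hsdef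
  have hs : 0 < s := Real.sqrt_pos.mpr hpos
  have hss : s^2 = q^2 + 4*μ^2 := Real.sq_sqrt hpos.le
  have h2μ : 2*μ ≤ s := by nlinarith [hss, hs]
  constructor
  · have h1 : HasDerivAt (fun q : ℝ => q^2 + 4*μ^2) (2*q) q := by
      simpa using (hasDerivAt_pow 2 q).add_const (4*μ^2)
    have h2 : HasDerivAt (fun q : ℝ => Real.sqrt (q^2 + 4*μ^2)) ((2*q) / (2*s)) q :=
      h1.sqrt hpos.ne'
    have h3 : HasDerivAt (fun q : ℝ => 2*q) 2 q := by
      simpa using (hasDerivAt_id q).const_mul 2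
    have h4 : HasDerivAt (fun q : ℝ => Real.sqrt (q^2 + 4*μ^2) / (2*q))
        (((2*q)/(2*s) * (2*q) - s * 2) / (2*q)^2) q := h2.div h3 (by simpa using hq)
    have h5 : HasDerivAt (fun q : ℝ => μ/q) ((0 * q - μ * 1) / q^2) q :=
      (hasDerivAt_const q μ).div (hasDerivAt_id q) hq
    have h6 := ((hasDerivAt_const q ((1:ℝ)/2)).sub h5).add h4
    refine h6.congr_deriv ?_
    field_simp
    linear_combination (-1) * hss
  · constructor
    · apply div_nonneg
      · nlinarith
      · positivity
    · rw [div_le_div_iff₀ (by positivity) (by positivity)]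
      nlinarith [mul_nonneg (sq_nonneg (s - 2*μ)) (by linarith : (0:ℝ) ≤ s + 4*μ), hss]
end

section
/- For μ ∈ (0,1), the function g(z) = (μ√(z+4μ²) − 2μ²)/(z√(z+4μ²)) is strictly decreasing in z on z > 0; in particular, (z+4μ²)³ − (8μ³ + 3μz)² = z³ + 3z²μ² > 0 for all z > 0. -/
/-!
Writing `s = √(z + 4μ²)`, we have `z = (s - 2μ)(s + 2μ)`, so `s - 2μ` cancels from
`g(z) = μ(s - 2μ) / (z s)`, leaving `g(z) = μ / (s (s + 2μ)) = μ / (z + 4μ² + 2μs)`.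
For `μ > 0` this denominator is positive and strictly increasing in `z`.
-/

open Real

lemma div_mul_sqrt_add_four_mul_sq_eq {μ z : ℝ} (hz : 0 < z) :
    (μ * √(z + 4 * μ ^ 2) - 2 * μ ^ 2) / (z * √(z + 4 * μ ^ 2))
      = μ / (z + 4 * μ ^ 2 + 2 * μ * √(z + 4 * μ ^ 2)) := by
  set s := √(z + 4 * μ ^ 2)
  have hs_sq : s ^ 2 = z + 4 * μ ^ 2 := sq_sqrt (by positivity)
  have hs_pos : 0 < s := sqrt_pos.mpr (by positivity)
  have hs_gt : -(2 * μ) < s := lt_sqrt_of_sq_lt (by linarith)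
  have hden : z + 4 * μ ^ 2 + 2 * μ * s = s * (s + 2 * μ) := by rw [← hs_sq]; ring
  rw [div_eq_div_iff (by positivity) (by rw [hden]; nlinarith)]
  linear_combination 2 * μ ^ 2 * hs_sq

lemma strictMono_add_four_mul_sq_add_mul_sqrt {μ : ℝ} (hμ : 0 ≤ μ) :
    StrictMono fun z : ℝ => z + 4 * μ ^ 2 + 2 * μ * √(z + 4 * μ ^ 2) :=
  (strictMono_id.add_const _).add_monotone <|
    (sqrt_monotone.comp (monotone_id.add_const _)).const_mul (by positivity)

/-- For `μ ∈ (0,1)`, the function `g(z) = (μ√(z+4μ²) − 2μ²)/(z√(z+4μ²))` is strictly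
decreasing on `z > 0`; in particular
`(z+4μ²)³ − (8μ³ + 3μz)² = z³ + 3z²μ² > 0` for all `z > 0`. -/
theorem g_strictAnti (μ : ℝ) (hμ : μ ∈ Set.Ioo (0:ℝ) 1) :
    StrictAntiOn (fun z : ℝ =>
        (μ * Real.sqrt (z + 4*μ^2) - 2*μ^2) / (z * Real.sqrt (z + 4*μ^2)))
      (Set.Ioi 0)
    ∧ ∀ z : ℝ, 0 < z →
        (z + 4*μ^2)^3 - (8*μ^3 + 3*μ*z)^2 = z^3 + 3*z^2*μ^2
        ∧ 0 < (z + 4*μ^2)^3 - (8*μ^3 + 3*μ*z)^2 := by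
  have hμ0 : 0 < μ := hμ.1
  have cubic (z : ℝ) : (z + 4*μ^2)^3 - (8*μ^3 + 3*μ*z)^2 = z^3 + 3*z^2*μ^2 := by ring
  refine ⟨fun x (hx : 0 < x) y (hy : 0 < y) hxy => ?_,
    fun z hz => ⟨cubic z, by rw [cubic]; positivity⟩⟩
  simp only [div_mul_sqrt_add_four_mul_sq_eq hx, div_mul_sqrt_add_four_mul_sq_eq hy]
  exact div_lt_div_of_pos_left hμ0 (by positivity)
    (strictMono_add_four_mul_sq_add_mul_sqrt hμ0.le hxy)
end
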